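/- arXiv:2008.01824 — 4 statements merged into one kernel-verified Lean document; each statement's English description precedes it below -/
import Mathlib

section
/- Let X be the basis of a k-maximal submonoid of Σ*. Then X is a bifix code: for all distinct x, y ∈ X, the word x is neither a prefix nor a suffix of y. -/
/-!
Suppose `y = x * z` (or `y = z * x`) with `x ≠ y` in the basis of a `k`-maximal submonoid `M`.
Replacing `y` by `z` in the basis gives a set of at most the same size whose generated submonoid
still contains `y`, hence contains `M`. By maximality it equals `M`, so `z ∈ M` and `y` factors
into two nonempty elements of `M`, contradicting `y ∈ basisOf M`.
-/

/-- The basis of a submonoid `M` of the free monoid `Σ*`: `(M \ {ε}) \ (M \ {ε})²`. -/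
def basisOf {α : Type*} (M : Submonoid (FreeMonoid α)) : Set (FreeMonoid α) :=
  ((M : Set (FreeMonoid α)) \ {1}) \
    {w | ∃ u ∈ (M : Set (FreeMonoid α)) \ {1}, ∃ v ∈ (M : Set (FreeMonoid α)) \ {1}, w = u * v}

/-- A submonoid of `Σ*` is `k`-maximal if its rank (cardinality of its basis) is at most `k`
and it is maximal (w.r.t. inclusion) among submonoids of rank at most `k`. -/
def IsKMaximal {α : Type*} (k : ℕ) (M : Submonoid (FreeMonoid α)) : Prop :=
  (basisOf M).Finite ∧ (basisOf M).ncard ≤ k ∧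
    ∀ M' : Submonoid (FreeMonoid α),
      (basisOf M').Finite → (basisOf M').ncard ≤ k → M ≤ M' → M = M'

section

variable {α : Type*}

theorem mul_notMem_basisOf {M : Submonoid (FreeMonoid α)} {u v : FreeMonoid α}
    (hu : u ∈ M) (hv : v ∈ M) (hu1 : u ≠ 1) (hv1 : v ≠ 1) : u * v ∉ basisOf M :=
  fun h => h.2 ⟨u, ⟨hu, hu1⟩, v, ⟨hv, hv1⟩, rfl⟩

theorem closure_basisOf (M : Submonoid (FreeMonoid α)) : Submonoid.closure (basisOf M) = M := by
  refine le_antisymm (Submonoid.closure_le.mpr fun _ h => h.1.1) fun m hm => ?_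
  induction hn : m.length using Nat.strong_induction_on generalizing m with
  | _ n ih =>
    by_cases h1 : m = 1
    · exact h1 ▸ one_mem _
    by_cases hb : m ∈ basisOf M
    · exact Submonoid.subset_closure hb
    obtain ⟨u, ⟨hu, hu1⟩, v, ⟨hv, hv1⟩, rfl⟩ : ∃ u ∈ (M : Set (FreeMonoid α)) \ {1},
        ∃ v ∈ (M : Set (FreeMonoid α)) \ {1}, m = u * v := by
      by_contra hc
      exact hb ⟨⟨hm, h1⟩, hc⟩
    have hul : 0 < u.length := Nat.pos_of_ne_zero (mt FreeMonoid.length_eq_zero.mp hu1)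
    have hvl : 0 < v.length := Nat.pos_of_ne_zero (mt FreeMonoid.length_eq_zero.mp hv1)
    rw [FreeMonoid.length_mul] at hn
    exact mul_mem (ih _ (by omega) u hu rfl) (ih _ (by omega) v hv rfl)

theorem basisOf_closure_subset (S : Set (FreeMonoid α)) :
    basisOf (Submonoid.closure S) ⊆ S := by
  rintro w ⟨⟨hw, hw1⟩, hw2⟩
  suffices w = 1 ∨ w ∈ S ∨ w ∉ basisOf (Submonoid.closure S) by
    exact this.elim (absurd · hw1) (·.resolve_right (absurd ⟨⟨hw, hw1⟩, hw2⟩))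
  clear hw1 hw2
  induction hw using Submonoid.closure_induction with
  | mem x hx => exact Or.inr (Or.inl hx)
  | one => exact Or.inl rfl
  | mul x y hx hy ihx ihy =>
    by_cases hx1 : x = 1
    · simpa [hx1] using ihy
    by_cases hy1 : y = 1
    · simpa [hy1] using ihx
    exact Or.inr (Or.inr (mul_notMem_basisOf hx hy hx1 hy1))

namespace IsKMaximal

variable {k : ℕ} {M : Submonoid (FreeMonoid α)}

theorem eq_closure_of_le (hmax : IsKMaximal k M) {S : Set (FreeMonoid α)} (hS : S.Finite)
    (hSk : S.ncard ≤ k) (hle : M ≤ Submonoid.closure S) : M = Submonoid.closure S :=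
  hmax.2.2 _ (hS.subset (basisOf_closure_subset S))
    ((Set.ncard_le_ncard (basisOf_closure_subset S) hS).trans hSk) hle

theorem mem_of_mem_closure_exchange (hmax : IsKMaximal k M) {y z : FreeMonoid α}
    (hy : y ∈ basisOf M) (hyz : y ∈ Submonoid.closure (insert z (basisOf M \ {y}))) :
    z ∈ M := by
  set S := insert z (basisOf M \ {y})
  have hS : S.Finite := hmax.1.sdiff.insert z
  have hSk : S.ncard ≤ k :=
    calc S.ncard ≤ (basisOf M \ {y}).ncard + 1 := Set.ncard_insert_le _ _
      _ = (basisOf M).ncard := Set.ncard_sdiff_singleton_add_one hy hmax.1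
      _ ≤ k := hmax.2.1
  have hle : M ≤ Submonoid.closure S := by
    rw [← closure_basisOf M, Submonoid.closure_le]
    intro s hs
    by_cases hsy : s = y
    · exact hsy ▸ hyz
    · exact Submonoid.subset_closure (Set.mem_insert_of_mem _ ⟨hs, hsy⟩)
  rw [hmax.eq_closure_of_le hS hSk hle]
  exact Submonoid.subset_closure (Set.mem_insert _ _)

theorem mul_right_notMem_basisOf (hmax : IsKMaximal k M) {x z : FreeMonoid α}
    (hx : x ∈ basisOf M) (hz : z ≠ 1) : x * z ∉ basisOf M := by
  intro hxz
  have hxy : x ∈ basisOf M \ {x * z} := ⟨hx, by simpa using hz⟩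
  have hzM : z ∈ M := hmax.mem_of_mem_closure_exchange hxz <|
    mul_mem (Submonoid.subset_closure (Set.mem_insert_of_mem _ hxy))
      (Submonoid.subset_closure (Set.mem_insert _ _))
  exact mul_notMem_basisOf hx.1.1 hzM hx.1.2 hz hxz

theorem mul_left_notMem_basisOf (hmax : IsKMaximal k M) {x z : FreeMonoid α}
    (hx : x ∈ basisOf M) (hz : z ≠ 1) : z * x ∉ basisOf M := by
  intro hzx
  have hxy : x ∈ basisOf M \ {z * x} := ⟨hx, by simpa using hz⟩
  have hzM : z ∈ M := hmax.mem_of_mem_closure_exchange hzx <|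
    mul_mem (Submonoid.subset_closure (Set.mem_insert _ _))
      (Submonoid.subset_closure (Set.mem_insert_of_mem _ hxy))
  exact mul_notMem_basisOf hzM hx.1.1 hz hx.1.2 hzx

end IsKMaximal

end

/-- The basis of a `k`-maximal submonoid is a bifix code: no element is a prefix
or a suffix of another element. -/
theorem basis_of_kMaximal_is_bifix {α : Type*} (k : ℕ) (M : Submonoid (FreeMonoid α))
    (hmax : IsKMaximal k M) :
    ∀ x ∈ basisOf M, ∀ y ∈ basisOf M, x ≠ y →
      (¬ ∃ z : FreeMonoid α, y = x * z) ∧ (¬ ∃ z : FreeMonoid α, y = z * x) := by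
  intro x hx y hy hxy
  constructor
  · rintro ⟨z, rfl⟩
    have hz : z ≠ 1 := by rintro rfl; simp at hxy
    exact hmax.mul_right_notMem_basisOf hx hz hy
  · rintro ⟨z, rfl⟩
    have hz : z ≠ 1 := by rintro rfl; simp at hxy
    exact hmax.mul_left_notMem_basisOf hx hz hy
end

section
/- Let X be the basis of a k-maximal submonoid of Σ*. Then X is a code: every word of X* admits exactly one factorization as a concatenation of elements of X. -/
namespace KMaxCode

variable {α : Type*}

lemma mem_of_mem_basisOf {M : Submonoid (FreeMonoid α)} {x : FreeMonoid α}
    (h : x ∈ basisOf M) : x ∈ M := h.1.1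

lemma ne_one_of_mem_basisOf {M : Submonoid (FreeMonoid α)} {x : FreeMonoid α}
    (h : x ∈ basisOf M) : x ≠ 1 := h.1.2

lemma mem_basisOf_iff {M : Submonoid (FreeMonoid α)} {x : FreeMonoid α} :
    x ∈ basisOf M ↔ (x ∈ M ∧ x ≠ 1) ∧
      ¬ ∃ u, (u ∈ M ∧ u ≠ 1) ∧ ∃ v, (v ∈ M ∧ v ≠ 1) ∧ x = u * v := by
  simp [basisOf, Set.mem_diff, Set.mem_singleton_iff, and_assoc]

/-- Every element of a submonoid factors into basis elements. -/
lemma exists_factorization (M : Submonoid (FreeMonoid α)) :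
    ∀ w ∈ M, ∃ l : List (FreeMonoid α), (∀ a ∈ l, a ∈ basisOf M) ∧ l.prod = w := by
  intro w hw
  obtain ⟨n, hn⟩ : ∃ n, w.length = n := ⟨_, rfl⟩
  induction n using Nat.strong_induction_on generalizing w with
  | _ n ih =>
  subst hn
  by_cases h1 : w = 1
  · exact ⟨[], by simp, by simp [h1]⟩
  by_cases hb : w ∈ basisOf M
  · exact ⟨[w], by simpa using hb, by simp⟩
  · rw [mem_basisOf_iff] at hb
    push_neg at hb
    obtain ⟨u, ⟨hu, hu1⟩, v, ⟨hv, hv1⟩, huv⟩ := hb ⟨hw, h1⟩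
    have hul : 0 < u.length := by
      rcases Nat.eq_zero_or_pos u.length with h | h
      · exact absurd (FreeMonoid.length_eq_zero.mp h) hu1
      · exact h
    have hvl : 0 < v.length := by
      rcases Nat.eq_zero_or_pos v.length with h | h
      · exact absurd (FreeMonoid.length_eq_zero.mp h) hv1
      · exact h
    have hlen : w.length = u.length + v.length := by rw [huv, FreeMonoid.length_mul]
    obtain ⟨lu, hlu, hlup⟩ := ih u.length (by omega) u hu rfl
    obtain ⟨lv, hlv, hlvp⟩ := ih v.length (by omega) v hv rfl
    refine ⟨lu ++ lv, ?_, ?_⟩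
    · intro a ha; rcases List.mem_append.mp ha with h | h
      · exact hlu a h
      · exact hlv a h
    · rw [List.prod_append, hlup, hlvp, huv]

/-- Stability condition of Schützenberger. -/
def Stable (S : Submonoid (FreeMonoid α)) : Prop :=
  ∀ u v w : FreeMonoid α, u ∈ S → v ∈ S → u * w ∈ S → w * v ∈ S → w ∈ S

/-- A list of basis elements with product 1 is empty. -/
lemma eq_nil_of_prod_eq_one {M : Submonoid (FreeMonoid α)} {l : List (FreeMonoid α)}
    (hl : ∀ a ∈ l, a ∈ basisOf M) (hp : l.prod = 1) : l = [] := by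
  cases l with
  | nil => rfl
  | cons a t =>
    exfalso
    have ha := ne_one_of_mem_basisOf (hl a (by simp))
    have : (a * t.prod).length = 0 := by
      rw [show a * t.prod = (a :: t).prod by simp, hp]; simp
    rw [FreeMonoid.length_mul] at this
    exact ha (FreeMonoid.length_eq_zero.mp (by omega))

/-- The basis of a stable submonoid is a code. -/
lemma code_of_stable {S : Submonoid (FreeMonoid α)} (hS : Stable S) :
    ∀ l m : List (FreeMonoid α), (∀ a ∈ l, a ∈ basisOf S) → (∀ a ∈ m, a ∈ basisOf S) →
      l.prod = m.prod → l = m := by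
  intro l
  induction l with
  | nil =>
    intro m _ hm hp
    exact (eq_nil_of_prod_eq_one hm (by simpa using hp.symm)).symm
  | cons a l' ih =>
    intro m hl hm hp
    cases m with
    | nil =>
      exact absurd (eq_nil_of_prod_eq_one hl (by simpa using hp)) (by simp)
    | cons b m' =>
      have ha := hl a (by simp)
      have hb := hm b (by simp)
      have hp' : FreeMonoid.toList a ++ FreeMonoid.toList l'.prod
          = FreeMonoid.toList b ++ FreeMonoid.toList m'.prod := by
        have := congrArg FreeMonoid.toList hp
        simpa [FreeMonoid.toList_mul] using this
      -- key: show a = b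
      have hab : a = b := by
        rcases List.append_eq_append_iff.mp hp' with ⟨w, hw1, hw2⟩ | ⟨w, hw1, hw2⟩
        · -- toList b = toList a ++ w
          by_cases hwnil : w = []
          · subst hwnil
            exact FreeMonoid.toList.injective (by simpa using hw1.symm)
          · exfalso
            set W : FreeMonoid α := FreeMonoid.toList.symm w with hW
            have hWne : W ≠ 1 := by
              intro h
              apply hwnil
              have := congrArg FreeMonoid.toList h
              simpa [hW] using this
            have hbW : b = a * W := FreeMonoid.toList.injective (by
              simpa [FreeMonoid.toList_mul, hW] using hw1)
            have hWm : W * m'.prod = l'.prod := FreeMonoid.toList.injective (by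
              simpa [FreeMonoid.toList_mul, hW] using hw2.symm)
            have hWS : W ∈ S := hS a m'.prod W
              (mem_of_mem_basisOf ha)
              (Submonoid.list_prod_mem S (fun x hx => mem_of_mem_basisOf (hm x (by simp [hx]))))
              (hbW ▸ mem_of_mem_basisOf hb)
              (hWm ▸ Submonoid.list_prod_mem S
                (fun x hx => mem_of_mem_basisOf (hl x (by simp [hx]))))
            exact hb.2 ⟨a, ⟨mem_of_mem_basisOf ha, ne_one_of_mem_basisOf ha⟩,
              W, ⟨hWS, hWne⟩, hbW⟩
        · -- toList a = toList b ++ w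
          by_cases hwnil : w = []
          · subst hwnil
            exact FreeMonoid.toList.injective (by simpa using hw1)
          · exfalso
            set W : FreeMonoid α := FreeMonoid.toList.symm w with hW
            have hWne : W ≠ 1 := by
              intro h
              apply hwnil
              have := congrArg FreeMonoid.toList h
              simpa [hW] using this
            have haW : a = b * W := FreeMonoid.toList.injective (by
              simpa [FreeMonoid.toList_mul, hW] using hw1)
            have hWl : W * l'.prod = m'.prod := FreeMonoid.toList.injective (by
              simpa [FreeMonoid.toList_mul, hW] using hw2.symm)
            have hWS : W ∈ S := hS b l'.prod W
              (mem_of_mem_basisOf hb)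
              (Submonoid.list_prod_mem S (fun x hx => mem_of_mem_basisOf (hl x (by simp [hx]))))
              (haW ▸ mem_of_mem_basisOf ha)
              (hWl ▸ Submonoid.list_prod_mem S
                (fun x hx => mem_of_mem_basisOf (hm x (by simp [hx]))))
            exact ha.2 ⟨b, ⟨mem_of_mem_basisOf hb, ne_one_of_mem_basisOf hb⟩,
              W, ⟨hWS, hWne⟩, haW⟩
      subst hab
      have hp'' : l'.prod = m'.prod := by
        have : FreeMonoid.toList l'.prod = FreeMonoid.toList m'.prod :=
          List.append_cancel_left hp'
        exact FreeMonoid.toList.injective this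
      rw [ih m' (fun x hx => hl x (by simp [hx])) (fun x hx => hm x (by simp [hx])) hp'']

/-- The stable hull of a set. -/
def stableHull (X : Set (FreeMonoid α)) : Submonoid (FreeMonoid α) :=
  sInf {S | Stable S ∧ X ⊆ S}

lemma subset_stableHull (X : Set (FreeMonoid α)) : X ⊆ (stableHull X : Set (FreeMonoid α)) := by
  intro x hx
  rw [stableHull, SetLike.mem_coe, Submonoid.mem_sInf]
  intro S hSmem
  exact hSmem.2 hx

lemma stableHull_stable (X : Set (FreeMonoid α)) : Stable (stableHull X) := by
  intro u v w hu hv huw hwv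
  rw [stableHull, Submonoid.mem_sInf] at *
  intro S hSmem
  exact hSmem.1 u v w (hu S hSmem) (hv S hSmem) (huw S hSmem) (hwv S hSmem)

lemma stableHull_le {X : Set (FreeMonoid α)} {T : Submonoid (FreeMonoid α)}
    (hT : Stable T) (hXT : X ⊆ T) : stableHull X ≤ T :=
  sInf_le ⟨hT, hXT⟩

end KMaxCode

open KMaxCode in
/-- The basis of a `k`-maximal submonoid is a code: every word of the submonoid has
exactly one factorization into elements of the basis. -/
theorem basis_of_kMaximal_is_code {α : Type*} (k : ℕ) (M : Submonoid (FreeMonoid α))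
    (hmax : IsKMaximal k M) :
    ∀ w ∈ M, ∃! l : List (FreeMonoid α), (∀ a ∈ l, a ∈ basisOf M) ∧ l.prod = w := by
  obtain ⟨hfin, hcard, hmaxp⟩ := hmax
  set X := basisOf M with hX
  set S := stableHull X with hSdef
  have hS : Stable S := stableHull_stable X
  have hXS : X ⊆ (S : Set (FreeMonoid α)) := subset_stableHull X
  have hMS : M ≤ S := by
    intro w hw
    obtain ⟨l, hl, hp⟩ := exists_factorization M w hw
    exact hp ▸ Submonoid.list_prod_mem S (fun x hx => hXS (hl x hx))
  have Ycode := code_of_stable hS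
  -- choice-based head of a factorization
  classical
  let P : FreeMonoid α → List (FreeMonoid α) → Prop :=
    fun x l => (∀ a ∈ l, a ∈ basisOf S) ∧ l.prod = x ∧ l ≠ []
  let g : FreeMonoid α → FreeMonoid α := fun x =>
    if h : ∃ l, P x l then (h.choose).headI else 1
  -- any factorization of x ∈ X has head g x
  have hg : ∀ x ∈ X, ∀ l : List (FreeMonoid α), (∀ a ∈ l, a ∈ basisOf S) → l.prod = x →
      l ≠ [] ∧ l.headI = g x := by
    intro x hx l hl hp
    have hxne : x ≠ 1 := ne_one_of_mem_basisOf hx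
    have hlne : l ≠ [] := by
      intro h; subst h; exact hxne (by simpa using hp.symm)
    have hP : ∃ l', P x l' := ⟨l, hl, hp, hlne⟩
    have hspec := hP.choose_spec
    have : hP.choose = l := Ycode _ _ hspec.1 hl (by rw [hspec.2.1, hp])
    refine ⟨hlne, ?_⟩
    simp only [g, dif_pos hP]
    rw [this]
  -- surjectivity: basisOf S ⊆ g '' X
  have hsurj : basisOf S ⊆ g '' X := by
    by_contra hns
    rw [Set.not_subset] at hns
    obtain ⟨y, hy, hyim⟩ := hns
    -- the submonoid T
    let T : Submonoid (FreeMonoid α) :=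
      { carrier := {w | w ∈ S ∧ ∀ l : List (FreeMonoid α),
          (∀ a ∈ l, a ∈ basisOf S) → l.prod = w → l.head? ≠ some y}
        one_mem' := by
          refine ⟨S.one_mem, ?_⟩
          intro l hl hp
          rw [eq_nil_of_prod_eq_one hl hp]
          simp
        mul_mem' := by
          rintro u v ⟨huS, hu⟩ ⟨hvS, hv⟩
          refine ⟨S.mul_mem huS hvS, ?_⟩
          intro l hl hp hhead
          obtain ⟨lu, hlu, hlup⟩ := exists_factorization S u huS
          obtain ⟨lv, hlv, hlvp⟩ := exists_factorization S v hvS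
          have hluv : ∀ a ∈ lu ++ lv, a ∈ basisOf S := by
            intro a ha; rcases List.mem_append.mp ha with h | h
            · exact hlu a h
            · exact hlv a h
          have : l = lu ++ lv := Ycode _ _ hl hluv (by
            rw [List.prod_append, hlup, hlvp, hp])
          subst this
          cases lu with
          | nil => exact hv lv hlv hlvp (by simpa using hhead)
          | cons c t =>
            exact hu (c :: t) hlu hlup (by simpa using hhead) }
    have hTstable : Stable T := by
      intro u v w hu hv huw hwv
      have hwS : w ∈ S := hS u v w hu.1 hv.1 huw.1 hwv.1
      refine ⟨hwS, ?_⟩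
      intro lw hlw hlwp hhead
      obtain ⟨lv, hlv, hlvp⟩ := exists_factorization S v hv.1
      have hwvfac : ∀ a ∈ lw ++ lv, a ∈ basisOf S := by
        intro a ha; rcases List.mem_append.mp ha with h | h
        · exact hlw a h
        · exact hlv a h
      refine hwv.2 (lw ++ lv) hwvfac (by rw [List.prod_append, hlwp, hlvp]) ?_
      cases lw with
      | nil => simp at hhead
      | cons c t => simpa using hhead
    have hXT : X ⊆ (T : Set (FreeMonoid α)) := by
      intro x hx
      refine ⟨hXS hx, ?_⟩
      intro l hl hp hhead
      obtain ⟨hlne, hheadg⟩ := hg x hx l hl hp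
      apply hyim
      refine ⟨x, hx, ?_⟩
      rw [← hheadg]
      cases l with
      | nil => exact absurd rfl hlne
      | cons c t => simp at hhead ⊢; exact hhead
    have hST : S ≤ T := stableHull_le hTstable hXT
    have hyT : y ∈ T := hST (mem_of_mem_basisOf hy)
    exact hyT.2 [y] (by simpa using hy) (by simp) (by simp)
  -- cardinality bound
  have himfin : (g '' X).Finite := hfin.image g
  have hbfin : (basisOf S).Finite := himfin.subset hsurj
  have hbcard : (basisOf S).ncard ≤ k :=
    le_trans (le_trans (Set.ncard_le_ncard hsurj himfin) (Set.ncard_image_le hfin)) hcard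
  -- maximality
  have hMeq : M = S := hmaxp S hbfin hbcard hMS
  -- conclusion
  intro w hw
  obtain ⟨l, hl, hp⟩ := exists_factorization M w hw
  refine ⟨l, ⟨hl, hp⟩, ?_⟩
  rintro m ⟨hm, hmp⟩
  have : basisOf M = basisOf S := by rw [hMeq]
  exact Ycode m l (fun a ha => this ▸ hm a ha) (fun a ha => this ▸ hl a ha)
    (by rw [hmp, hp])
end

section
/- If x and u are two distinct primitive nonempty words over Σ, then the submonoids they generate intersect trivially: x* ∩ u* = {ε}. -/
open FreeMonoid

namespace PrimAux

variable {α : Type*}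

theorem toList_pow_length (a : FreeMonoid α) (n : ℕ) :
    (toList (a ^ n)).length = n * (toList a).length := by
  induction n with
  | zero => simp [toList_one]
  | succ k ih =>
    rw [pow_succ, toList_mul, List.length_append, ih, Nat.succ_mul]

theorem pow_left_inj {a b : FreeMonoid α} {n : ℕ} (hn : n ≠ 0) (h : a ^ n = b ^ n) :
    a = b := by
  have hlen : (toList a).length = (toList b).length := by
    have := congrArg (fun z => (toList z).length) h
    simp only [toList_pow_length] at this
    exact Nat.eq_of_mul_eq_mul_left (Nat.pos_of_ne_zero hn) this
  obtain ⟨m, rfl⟩ := Nat.exists_eq_succ_of_ne_zero hn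
  have ha : toList a <+: toList (a ^ (m + 1)) := by
    rw [pow_succ', toList_mul]; exact List.prefix_append _ _
  have hb : toList b <+: toList (b ^ (m + 1)) := by
    rw [pow_succ', toList_mul]; exact List.prefix_append _ _
  rw [h] at ha
  have : toList a = toList b :=
    (List.prefix_of_prefix_length_le ha hb hlen.le).eq_of_length hlen
  exact toList.injective this

/-- If two words commute, they are powers of a common word. -/
theorem comm_root (x u : FreeMonoid α) (h : x * u = u * x) :
    ∃ (w : FreeMonoid α) (k l : ℕ), x = w ^ k ∧ u = w ^ l := by
  -- strong induction on total length
  generalize hN : (toList x).length + (toList u).length = N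
  induction N using Nat.strong_induction_on generalizing x u with
  | _ N IH =>
  subst hN
  rcases eq_or_ne x 1 with rfl | hx1
  · exact ⟨u, 0, 1, by simp⟩
  rcases eq_or_ne u 1 with rfl | hu1
  · exact ⟨x, 1, 0, by simp⟩
  -- core argument, done for the shorter of x, u
  have core : ∀ x u : FreeMonoid α, x * u = u * x → x ≠ 1 →
      (toList x).length ≤ (toList u).length →
      (toList x).length + (toList u).length = (toList x).length + (toList u).length →
      ∀ (hlt : True), (∀ m, m < (toList x).length + (toList u).length →
        ∀ a b : FreeMonoid α, a * b = b * a → (toList a).length + (toList b).length = m →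
          ∃ (w : FreeMonoid α) (k l : ℕ), a = w ^ k ∧ b = w ^ l) →
      ∃ (w : FreeMonoid α) (k l : ℕ), x = w ^ k ∧ u = w ^ l := by
    intro x u h hx1 hle _ _ IH
    have hpre : toList x <+: toList u := by
      have h1 : toList x <+: toList (u * x) := by
        rw [← h, toList_mul]; exact List.prefix_append _ _
      have h2 : toList u <+: toList (u * x) := by
        rw [toList_mul]; exact List.prefix_append _ _
      exact List.prefix_of_prefix_length_le h1 h2 hle
    obtain ⟨vl, hv⟩ := hpre
    set v : FreeMonoid α := ofList vl with hvdef
    have huv : u = x * v := toList.injective (by rw [toList_mul]; exact hv.symm)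
    subst huv
    have h' : x * v = v * x := by
      have := h
      rw [mul_assoc x v x] at this
      exact mul_left_cancel this
    have hxpos : 0 < (toList x).length := by
      rcases Nat.eq_zero_or_pos (toList x).length with h0 | h0
      · exact absurd (toList.injective (List.eq_nil_of_length_eq_zero h0)) hx1
      · exact h0
    obtain ⟨w, k, l, hxw, hvw⟩ :=
      IH ((toList x).length + (toList v).length)
        (by rw [toList_mul, List.length_append]; omega) x v h' rfl
    exact ⟨w, k, k + l, hxw, by rw [hxw, hvw, ← pow_add]⟩
  rcases le_total (toList x).length (toList u).length with hle | hle
  · exact core x u h hx1 hle rfl trivial IH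
  · obtain ⟨w, k, l, h1, h2⟩ := core u x h.symm hu1 hle rfl trivial
      (by intro m hm a b hab hlen
          exact IH m (by omega) a b hab (by omega))
    exact ⟨w, l, k, h2, h1⟩

theorem semiconj_pow (a b : FreeMonoid α) (n : ℕ) :
    (a * b) ^ n * a = a * (b * a) ^ n := by
  have : SemiconjBy a (b * a) (a * b) := by
    unfold SemiconjBy; rw [mul_assoc]
  exact ((this.pow_right n).eq).symm

theorem commute_of_pow_eq_pow :
    ∀ x u : FreeMonoid α, ∀ m n : ℕ, m ≠ 0 → n ≠ 0 → x ^ m = u ^ n → x * u = u * x := by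
  have core : ∀ x u : FreeMonoid α, ∀ m n : ℕ, m ≠ 0 → n ≠ 0 → x ^ m = u ^ n →
      (toList x).length ≤ (toList u).length → x * u = u * x := by
    intro x u m n hm hn h hle
    obtain ⟨m', hm'⟩ := Nat.exists_eq_succ_of_ne_zero hm
    obtain ⟨n', hn'⟩ := Nat.exists_eq_succ_of_ne_zero hn
    rw [hm', hn'] at h
    have hpre : toList x <+: toList u := by
      have h1 : toList x <+: toList (x ^ (m' + 1)) := by
        rw [pow_succ', toList_mul]; exact List.prefix_append _ _
      have h2 : toList u <+: toList (u ^ (n' + 1)) := by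
        rw [pow_succ', toList_mul]; exact List.prefix_append _ _
      rw [h] at h1
      exact List.prefix_of_prefix_length_le h1 h2 hle
    obtain ⟨vl, hv⟩ := hpre
    set v : FreeMonoid α := ofList vl with hvdef
    have huv : u = x * v := toList.injective (by rw [toList_mul]; exact hv.symm)
    subst huv
    -- x^(m+1) = (x*v)^(n+1); also (x*v)^(n+1) * x = x * (v*x)^(n+1)
    have key : x ^ (m' + 1) = (v * x) ^ (n' + 1) := by
      have e1 : x * x ^ (m' + 1) = x * (v * x) ^ (n' + 1) := by
        rw [← pow_succ', pow_succ x (m' + 1), h, semiconj_pow]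
      exact mul_left_cancel e1
    have hxv : x * v = v * x := pow_left_inj (Nat.succ_ne_zero n') (h.symm.trans key)
    calc x * (x * v) = x * (v * x) := by rw [hxv]
      _ = (x * v) * x := by rw [mul_assoc]
  intro x u m n hm hn h
  rcases le_total (toList x).length (toList u).length with hle | hle
  · exact core x u m n hm hn h hle
  · exact (core u x n m hn hm h.symm hle).symm

end PrimAux

/-- A nonempty word is primitive if it is not a proper power: `w = vⁿ` implies `n = 1`. -/
def Primitive {α : Type*} (w : FreeMonoid α) : Prop :=
  w ≠ 1 ∧ ∀ (v : FreeMonoid α) (n : ℕ), w = v ^ n → n = 1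

/-- Two distinct primitive words generate submonoids intersecting trivially:
`x* ∩ u* = {ε}`. -/
theorem primitive_powers_intersect_trivially {α : Type*} (x u : FreeMonoid α)
    (hx : Primitive x) (hu : Primitive u) (hxu : x ≠ u) :
    Submonoid.closure ({x} : Set (FreeMonoid α)) ⊓
      Submonoid.closure ({u} : Set (FreeMonoid α)) = ⊥ := by
  rw [eq_bot_iff]
  intro z hz
  rw [Submonoid.mem_inf] at hz
  obtain ⟨m, hm⟩ := Submonoid.mem_closure_singleton.mp hz.1
  obtain ⟨n, hn⟩ := Submonoid.mem_closure_singleton.mp hz.2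
  rw [Submonoid.mem_bot]
  by_contra hz1
  have hm0 : m ≠ 0 := by rintro rfl; simp at hm; exact hz1 hm.symm
  have hn0 : n ≠ 0 := by rintro rfl; simp at hn; exact hz1 hn.symm
  have hcomm : x * u = u * x :=
    PrimAux.commute_of_pow_eq_pow x u m n hm0 hn0 (hm.trans hn.symm)
  obtain ⟨w, k, l, hxw, huw⟩ := PrimAux.comm_root x u hcomm
  have hk : k = 1 := hx.2 w k hxw
  have hl : l = 1 := hu.2 w l huw
  apply hxu
  rw [hxw, huw, hk, hl]
end

section
/- Let X be a finite set of nonempty words over Σ and let alp(X) be the set of letters of Σ occurring in the words of X. If |X| = |alp(X)| = k, then X* is a k-maximal submonoid of Σ* if and only if X* = alp(X)*, i.e., X* is the set of all words whose letters all lie in alp(X). -/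
/-- `alp X`: the set of letters occurring in the words of `X`. -/
def alp {α : Type*} (X : Set (FreeMonoid α)) : Set α :=
  {a | ∃ w ∈ X, a ∈ FreeMonoid.toList w}

/-!
`X* ⊆ alp(X)*` always holds, and `alp(X)*` has the letters of `alp(X)` as its basis, so it has
rank `|alp(X)| = k`; maximality of `X*` thus forces `X* = alp(X)*`. Conversely, a submonoid
containing `alp(X)*` has every letter of `alp(X)` in its basis, since letters cannot be factored.
If its rank is at most `k` these letters make up its whole basis, and as every submonoid of `Σ*`
is generated by its basis, it equals `alp(X)*`.
-/

namespace FreeMonoid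

variable {α : Type*}

open Submonoid

lemma of_mem_basisOf {M : Submonoid (FreeMonoid α)} {a : α} (h : of a ∈ M) :
    of a ∈ basisOf M := by
  refine ⟨⟨h, of_ne_one a⟩, ?_⟩
  rintro ⟨u, ⟨-, hu⟩, v, ⟨-, hv⟩, huv⟩
  have hlen := congrArg length huv
  rw [length_of, length_mul] at hlen
  have := mt length_eq_zero.1 hu
  have := mt length_eq_zero.1 hv
  omega

lemma closure_basisOf (M : Submonoid (FreeMonoid α)) : closure (basisOf M) = M := by
  refine le_antisymm (closure_le.2 fun w hw => hw.1.1) fun w hw => ?_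
  induction hn : w.length using Nat.strong_induction_on generalizing w with
  | _ n ih =>
    by_cases h1 : w = 1
    · exact h1 ▸ one_mem _
    by_cases hb : w ∈ basisOf M
    · exact subset_closure hb
    obtain ⟨u, ⟨hu, hu1⟩, v, ⟨hv, hv1⟩, rfl⟩ :
        ∃ u ∈ (M : Set (FreeMonoid α)) \ {1}, ∃ v ∈ (M : Set (FreeMonoid α)) \ {1}, w = u * v := by
      by_contra hc
      exact hb ⟨⟨hw, h1⟩, hc⟩
    have hu0 := mt length_eq_zero.1 hu1
    have hv0 := mt length_eq_zero.1 hv1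
    rw [length_mul] at hn
    exact mul_mem (ih u.length (by omega) u hu rfl) (ih v.length (by omega) v hv rfl)

lemma basisOf_closure_subset (S : Set (FreeMonoid α)) : basisOf (closure S) ⊆ S := by
  suffices h : ∀ w ∈ closure S, w ≠ 1 → w ∈ S ∨
      ∃ u ∈ (closure S : Set (FreeMonoid α)) \ {1},
        ∃ v ∈ (closure S : Set (FreeMonoid α)) \ {1}, w = u * v by
    rintro w ⟨⟨hw, h1⟩, hnd⟩
    exact (h w hw h1).resolve_right hnd
  intro w hw
  induction hw using closure_induction_left with
  | one => exact fun h => (h rfl).elim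
  | mul_left s hs m hm ih =>
    intro hsm
    by_cases hs1 : s = 1
    · subst hs1
      rw [one_mul] at hsm ⊢
      exact ih hsm
    by_cases hm1 : m = 1
    · subst hm1
      rw [mul_one]
      exact Or.inl hs
    exact Or.inr ⟨s, ⟨subset_closure hs, hs1⟩, m, ⟨hm, hm1⟩, rfl⟩

lemma basisOf_closure_image_of (S : Set α) : basisOf (closure (of '' S)) = of '' S := by
  refine (basisOf_closure_subset _).antisymm ?_
  rintro _ ⟨a, ha, rfl⟩
  exact of_mem_basisOf (subset_closure ⟨a, ha, rfl⟩)

lemma mem_closure_image_of {S : Set α} {w : FreeMonoid α} (h : ∀ a ∈ w, a ∈ S) :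
    w ∈ closure (of '' S) := by
  induction w using FreeMonoid.inductionOn' with
  | one => exact one_mem _
  | of_mul a w ih =>
    exact mul_mem (subset_closure ⟨a, h a (mem_mul.2 (Or.inl mem_of_self)), rfl⟩)
      (ih fun b hb => h b (mem_mul.2 (Or.inr hb)))

lemma isKMaximal_closure_image_of {S : Set α} (hS : S.Finite) :
    IsKMaximal S.ncard (closure (of '' S)) := by
  have hcard : (of '' S).ncard = S.ncard := Set.ncard_image_of_injective S of_injective
  rw [IsKMaximal, basisOf_closure_image_of, hcard]
  refine ⟨hS.image of, le_rfl, fun M' hfin hle hSM' => ?_⟩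
  have hsub : of '' S ⊆ basisOf M' := by
    rintro _ ⟨a, ha, rfl⟩
    exact of_mem_basisOf (hSM' (subset_closure ⟨a, ha, rfl⟩))
  rw [← closure_basisOf M', ← Set.eq_of_subset_of_ncard_le hsub (hcard ▸ hle) hfin]

end FreeMonoid

section Alp

variable {α : Type*}

open FreeMonoid Submonoid

lemma alp_finite {X : Set (FreeMonoid α)} (hX : X.Finite) : (alp X).Finite :=
  (hX.biUnion fun w _ => w.toList.finite_toSet).subset fun _ ⟨_, hw, ha⟩ =>
    Set.mem_biUnion hw ha

lemma closure_le_closure_image_of_alp (X : Set (FreeMonoid α)) :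
    closure X ≤ closure (of '' alp X) :=
  closure_le.2 fun w hw => mem_closure_image_of fun _ ha => ⟨w, hw, ha⟩

end Alp

theorem kMaximal_iff_closure_alp_general {α : Type*} (k : ℕ) (X : Set (FreeMonoid α))
    (hfin : X.Finite) (halp : (alp X).ncard = k) :
    IsKMaximal k (Submonoid.closure X) ↔
      Submonoid.closure X = Submonoid.closure (FreeMonoid.of '' alp X) := by
  have hmax : IsKMaximal k (Submonoid.closure (FreeMonoid.of '' alp X)) :=
    halp ▸ FreeMonoid.isKMaximal_closure_image_of (alp_finite hfin)
  exact ⟨fun h => h.2.2 _ hmax.1 hmax.2.1 (closure_le_closure_image_of_alp X),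
    fun h => h ▸ hmax⟩

/-- If `X` is a finite set of `k` nonempty words using exactly `k` letters, then `X*` is
`k`-maximal iff `X* = alp(X)*`. -/
theorem kMaximal_iff_closure_alp {α : Type*} (k : ℕ) (X : Set (FreeMonoid α))
    (hfin : X.Finite) (hne : ∀ w ∈ X, w ≠ 1)
    (hcard : X.ncard = k) (halp : (alp X).ncard = k) :
    IsKMaximal k (Submonoid.closure X) ↔
      Submonoid.closure X = Submonoid.closure (FreeMonoid.of '' alp X) :=
  kMaximal_iff_closure_alp_general k X hfin halp
end
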